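/- arXiv:1910.14542 — 7 statements merged into one kernel-verified Lean document; each statement's English description precedes it below -/
import Mathlib

section
/- Let A be an integral domain with fraction field K, and let v : K → Γ ∪ {0} be a (multiplicatively written) valuation on K with values in a linearly ordered abelian group Γ with zero adjoined. Suppose the set v(A) of values of elements of A is not bounded above in Γ ∪ {0}, but the set v(A^×) of values of units of A is bounded above. Then for every nonconstant polynomial F ∈ A[Y] there exists b ∈ A with F(b) not a unit of A. -/
/-! Take `b ∈ A` of very large value. Then the leading term of `F(b)` strictly dominates all the
other terms, so `v(F(b)) = v(c) v(b)^n ≥ v(c) v(b)`, which exceeds every bound on `v(A^×)`. -/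

open Polynomial

namespace Valuation

variable {R Γ₀ : Type*} [CommRing R] [LinearOrderedCommGroupWithZero Γ₀]
  (v : Valuation R Γ₀)

theorem map_eval_eq_of_lt {p : R[X]} {x : R} (hc : v p.leadingCoeff ≠ 0) (hx : 1 ≤ v x)
    (hcoeff : ∀ i < p.natDegree, v (p.coeff i) < v (p.leadingCoeff * x)) :
    v (p.eval x) = v (p.leadingCoeff * x ^ p.natDegree) := by
  set n := p.natDegree
  have hx0 : v x ≠ 0 := (zero_lt_one.trans_le hx).ne'
  have hlower : ∀ i ∈ Finset.range n,
      v (p.coeff i * x ^ i) < v (p.leadingCoeff * x ^ n) := by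
    intro i hi
    have hin : i + 1 ≤ n := Finset.mem_range.mp hi
    calc v (p.coeff i * x ^ i) = v (p.coeff i) * v x ^ i := by rw [map_mul, map_pow]
      _ < v (p.leadingCoeff * x) * v x ^ i :=
          mul_lt_mul_of_pos_right (hcoeff i hin) (pow_pos (zero_lt_iff.mpr hx0) i)
      _ = v p.leadingCoeff * v x ^ (i + 1) := by rw [map_mul, pow_succ', mul_assoc]
      _ ≤ v p.leadingCoeff * v x ^ n := mul_le_mul_right (pow_le_pow_right₀ hx hin) _
      _ = v (p.leadingCoeff * x ^ n) := by rw [map_mul, map_pow]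
  have hsplit :
      p.eval x = (∑ i ∈ Finset.range n, p.coeff i * x ^ i) + p.leadingCoeff * x ^ n := by
    rw [eval_eq_sum_range, Finset.sum_range_succ, coeff_natDegree]
  rw [hsplit, map_add_eq_of_lt_right]
  exact v.map_sum_lt (by simp [n, hc, hx0]) hlower

theorem exists_lt_map_eval (hv : ∀ γ : Γ₀, ∃ x, γ < v x) {p : R[X]} (hp : 0 < p.natDegree)
    (hc : v p.leadingCoeff ≠ 0) (γ : Γ₀) : ∃ x, γ < v (p.eval x) := by
  set c := p.leadingCoeff
  set M := (Finset.range p.natDegree).sup fun i ↦ v (p.coeff i)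
  obtain ⟨x, hx⟩ := hv (max 1 ((γ ⊔ M) / v c))
  have hx1 : 1 < v x := (le_max_left _ _).trans_lt hx
  have hbig : γ ⊔ M < v (c * x) := by
    rw [map_mul, ← div_lt_iff₀' (zero_lt_iff.mpr hc)]
    exact (le_max_right _ _).trans_lt hx
  have hcoeff : ∀ i < p.natDegree, v (p.coeff i) < v (c * x) := fun i hi ↦
    ((Finset.le_sup (f := fun i ↦ v (p.coeff i)) (Finset.mem_range.mpr hi)).trans
      le_sup_right).trans_lt hbig
  refine ⟨x, ?_⟩
  calc γ ≤ γ ⊔ M := le_sup_left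
    _ < v (c * x) := hbig
    _ = v c * v x ^ 1 := by rw [map_mul, pow_one]
    _ ≤ v c * v x ^ p.natDegree := mul_le_mul_right (pow_le_pow_right₀ hx1.le hp) _
    _ = v (p.eval x) := by rw [v.map_eval_eq_of_lt hc hx1.le hcoeff, map_mul, map_pow]

end Valuation

theorem stmt_4_general {A K Γ₀ : Type*} [CommRing A] [Field K] [Algebra A K]
    [IsFractionRing A K] [LinearOrderedCommGroupWithZero Γ₀]
    (v : Valuation K Γ₀)
    (hA : ¬ ∃ γ : Γ₀, ∀ a : A, v (algebraMap A K a) ≤ γ)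
    (hAunits : ∃ γ : Γ₀, ∀ u : Aˣ, v (algebraMap A K (u : A)) ≤ γ)
    (F : Polynomial A) (hF : 0 < F.natDegree) :
    ∃ b : A, ¬ IsUnit (F.eval b) := by
  set w := v.comap (algebraMap A K)
  push Not at hA
  obtain ⟨γ, hγ⟩ := hAunits
  have hc : w F.leadingCoeff ≠ 0 := by
    simpa [w, IsFractionRing.injective A K] using
      leadingCoeff_ne_zero.mpr (ne_zero_of_natDegree_gt hF)
  obtain ⟨b, hb⟩ := w.exists_lt_map_eval hA hF hc γ
  exact ⟨b, fun ⟨u, hu⟩ ↦ (hγ u).not_gt (hu ▸ hb)⟩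

theorem stmt_4 {A K Γ₀ : Type*} [CommRing A] [IsDomain A] [Field K] [Algebra A K]
    [IsFractionRing A K] [LinearOrderedCommGroupWithZero Γ₀]
    (v : Valuation K Γ₀)
    (hA : ¬ ∃ γ : Γ₀, ∀ a : A, v (algebraMap A K a) ≤ γ)
    (hAunits : ∃ γ : Γ₀, ∀ u : Aˣ, v (algebraMap A K (u : A)) ≤ γ)
    (F : Polynomial A) (hF : 0 < F.natDegree) :
    ∃ b : A, ¬ IsUnit (F.eval b) :=
  stmt_4_general v hA hAunits F hF
end

section
/- Let A be an integral domain satisfying condition (P2): for every nonconstant F ∈ A[Y] there exists b ∈ A with F(b) ∉ A^×. Then for every nonzero g ∈ A, the localization A_g also satisfies (P2): for every nonconstant F ∈ A_g[Y] there exists b ∈ A_g with F(b) not a unit of A_g. -/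
/-!
Suppose every value of a nonconstant `F ∈ A_g[Y]` is a unit. Clearing denominators gives a
nonconstant `H ∈ A[Y]` whose values on `A` all divide powers of `g`; in particular `c = H(0) ≠ 0`.
Writing `H = c + Y R`, one has `H(g c Y) = c T(Y)` with `T = 1 + g Y R(g c Y)` nonconstant, so (P2)
gives `w` with `T(w)` not a unit. But `T(w)` divides `H(g c w)`, hence a power of `g`, while
`T(w) ≡ 1 mod g` makes it coprime to `g`: so `T(w)` is a unit after all.
-/

open Polynomial

namespace IsLocalization

variable {A S : Type*} [CommRing A] [CommRing S] [Algebra A S] (M : Submonoid A)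
  [IsLocalization M S]

theorem natDegree_le_natDegree_integerNormalization (F : S[X]) :
    F.natDegree ≤ (integerNormalization M F).natDegree := by
  obtain ⟨b, hb, hmap⟩ := integerNormalization_spec M F
  calc F.natDegree = (b • F).natDegree := by
        rw [← IsScalarTower.algebraMap_smul S b F, smul_eq_C_mul,
          natDegree_C_mul_of_isUnit (map_units S ⟨b, hb⟩)]
    _ = ((integerNormalization M F).map (algebraMap A S)).natDegree := by rw [hmap]
    _ ≤ (integerNormalization M F).natDegree := natDegree_map_le

theorem isUnit_algebraMap_eval_integerNormalization {F : S[X]} {z : A}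
    (h : IsUnit (F.eval (algebraMap A S z))) :
    IsUnit (algebraMap A S ((integerNormalization M F).eval z)) := by
  obtain ⟨b, hb, hmap⟩ := integerNormalization_spec M F
  rw [← eval₂_at_apply, ← eval_map, hmap, eval_smul, Algebra.smul_def]
  exact (map_units S ⟨b, hb⟩).mul h

end IsLocalization

namespace Polynomial

variable {A : Type*} [CommRing A]

noncomputable def rescaleByConst (g : A) (H : A[X]) : A[X] :=
  1 + C g * X * H.divX.comp (C (g * H.coeff 0) * X)

theorem C_coeff_zero_mul_rescaleByConst (g : A) (H : A[X]) :
    C (H.coeff 0) * rescaleByConst g H = H.comp (C (g * H.coeff 0) * X) := by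
  have h := congrArg (·.comp (C (g * H.coeff 0) * X)) (X_mul_divX_add H)
  simp only [add_comp, mul_comp, X_comp, C_comp] at h
  rw [← h, rescaleByConst, C_mul]
  ring

theorem isCoprime_eval_rescaleByConst (g : A) (H : A[X]) (w : A) :
    IsCoprime ((rescaleByConst g H).eval w) g :=
  ⟨1, -(w * (H.divX.comp (C (g * H.coeff 0) * X)).eval w), by
    simp only [rescaleByConst, eval_add, eval_one, eval_mul, eval_C, eval_X]
    ring⟩

theorem natDegree_rescaleByConst [IsDomain A] {g : A} (hg : g ≠ 0) {H : A[X]}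
    (hH : H.coeff 0 ≠ 0) : (rescaleByConst g H).natDegree = H.natDegree := by
  have h := congrArg natDegree (C_coeff_zero_mul_rescaleByConst g H)
  rwa [natDegree_C_mul hH, natDegree_comp, natDegree_C_mul_X _ (mul_ne_zero hg hH), mul_one] at h

end Polynomial

open IsLocalization.Away in
theorem exists_not_isUnit_algebraMap_eval {A : Type*} [CommRing A] [IsDomain A]
    (hP2 : ∀ F : A[X], 0 < F.natDegree → ∃ b : A, ¬ IsUnit (F.eval b))
    {g : A} (hg : g ≠ 0) {H : A[X]} (hH : 0 < H.natDegree) :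
    ∃ z : A, ¬ IsUnit (algebraMap A (Localization.Away g) (H.eval z)) := by
  by_contra! hunit
  have hc : H.coeff 0 ≠ 0 := by
    obtain ⟨m, hm⟩ := (algebraMap_isUnit_iff g).1 (coeff_zero_eq_eval_zero H ▸ hunit 0)
    rintro hc
    exact pow_ne_zero m hg (zero_dvd_iff.1 (hc ▸ hm))
  obtain ⟨w, hw⟩ := hP2 _ ((natDegree_rescaleByConst hg hc).symm ▸ hH)
  have hvalue : H.coeff 0 * (rescaleByConst g H).eval w = H.eval (g * H.coeff 0 * w) := by
    rw [← eval_C_mul, C_coeff_zero_mul_rescaleByConst, eval_comp]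
    simp
  obtain ⟨n, hn⟩ := (algebraMap_isUnit_iff g).1 <|
    isUnit_of_mul_isUnit_right (x := algebraMap A (Localization.Away g) (H.coeff 0))
      (by rw [← map_mul, hvalue]; exact hunit _)
  exact hw ((isCoprime_eval_rescaleByConst g H w).pow_right.isUnit_of_dvd' dvd_rfl hn)

theorem stmt_8 {A : Type*} [CommRing A] [IsDomain A]
    (hP2 : ∀ F : Polynomial A, 0 < F.natDegree → ∃ b : A, ¬ IsUnit (F.eval b))
    (g : A) (hg : g ≠ 0)
    (F : Polynomial (Localization.Away g)) (hF : 0 < F.natDegree) :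
    ∃ b : Localization.Away g, ¬ IsUnit (F.eval b) := by
  set M := Submonoid.powers g
  obtain ⟨z, hz⟩ := exists_not_isUnit_algebraMap_eval hP2 hg
    (hF.trans_le (IsLocalization.natDegree_le_natDegree_integerNormalization M F))
  exact ⟨algebraMap A _ z, fun h ↦ hz (IsLocalization.isUnit_algebraMap_eval_integerNormalization M h)⟩
end

section
/- Let A be an integral domain satisfying (P2), let g ∈ A be nonzero, and let F ∈ A[Y] be a nonconstant polynomial with F(0) ≠ 0. Then there exists b ∈ A such that the image of F(b) in the localization A_g is not a unit of A_g. -/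
/-!
Put `a := F(0)`. Since `F = a + Y · F.divX`, we have `F(a g Y) = a · H(Y)` with
`H := 1 + g Y · (F.divX)(a g Y) ∈ A[Y]`, and `H` has the same degree as `F` because `a g ≠ 0`.
By (P2) some `H(c)` is not a unit of `A`. As `H(c) ≡ 1 mod g`, it is coprime to `g`, and an element
coprime to `g` that becomes a unit in `A_g` divides a power of `g`, hence is already a unit.
So `b := a g c` works: a unit `F(b) = a · H(c)` of `A_g` would make `H(c)` a unit of `A_g`.
-/

open Polynomial

theorem IsCoprime.isUnit_of_isUnit_algebraMap_away {R S : Type*} [CommRing R] [CommRing S]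
    [Algebra R S] {g x : R} [IsLocalization.Away g S] (hx : IsCoprime x g)
    (h : IsUnit (algebraMap R S x)) : IsUnit x := by
  obtain ⟨n, hn⟩ := (IsLocalization.Away.algebraMap_isUnit_iff g).mp h
  exact hx.pow_right.isUnit_of_dvd' dvd_rfl hn

namespace Polynomial

variable {A : Type*} [CommRing A]

noncomputable def rescaledUnitPart (F : A[X]) (g : A) : A[X] :=
  1 + C g * X * F.divX.comp (C (F.eval 0 * g) * X)

theorem comp_C_mul_X_eq_C_mul_rescaledUnitPart (F : A[X]) (g : A) :
    F.comp (C (F.eval 0 * g) * X) = C (F.eval 0) * F.rescaledUnitPart g := by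
  nth_rw 1 [← X_mul_divX_add F]
  simp only [rescaledUnitPart, add_comp, mul_comp, X_comp, C_comp, coeff_zero_eq_eval_zero, C_mul]
  ring

theorem eval_mul_mul_eq_mul_eval_rescaledUnitPart (F : A[X]) (g c : A) :
    F.eval (F.eval 0 * g * c) = F.eval 0 * (F.rescaledUnitPart g).eval c := by
  simpa using congrArg (eval c) (comp_C_mul_X_eq_C_mul_rescaledUnitPart F g)

theorem isCoprime_eval_rescaledUnitPart (F : A[X]) (g c : A) :
    IsCoprime ((F.rescaledUnitPart g).eval c) g :=
  ⟨1, -(c * (F.divX.comp (C (F.eval 0 * g) * X)).eval c), by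
    simp only [rescaledUnitPart, eval_add, eval_mul, eval_one, eval_C, eval_X]; ring⟩

theorem natDegree_rescaledUnitPart [IsDomain A] (F : A[X]) {g : A} (hg : g ≠ 0)
    (hF0 : F.eval 0 ≠ 0) : (F.rescaledUnitPart g).natDegree = F.natDegree := by
  have h := congrArg natDegree (comp_C_mul_X_eq_C_mul_rescaledUnitPart F g)
  rwa [natDegree_comp, natDegree_C_mul_X _ (mul_ne_zero hF0 hg), mul_one,
    natDegree_C_mul hF0, eq_comm] at h

end Polynomial

theorem stmt_9 {A : Type*} [CommRing A] [IsDomain A]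
    (hP2 : ∀ G : Polynomial A, 0 < G.natDegree → ∃ c : A, ¬ IsUnit (G.eval c))
    (g : A) (hg : g ≠ 0)
    (F : Polynomial A) (hF : 0 < F.natDegree) (hF0 : F.eval 0 ≠ 0) :
    ∃ b : A, ¬ IsUnit (algebraMap A (Localization.Away g) (F.eval b)) := by
  obtain ⟨c, hc⟩ := hP2 (F.rescaledUnitPart g) (F.natDegree_rescaledUnitPart hg hF0 ▸ hF)
  refine ⟨F.eval 0 * g * c, fun hunit => hc ?_⟩
  rw [eval_mul_mul_eq_mul_eval_rescaledUnitPart, map_mul] at hunit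
  exact (isCoprime_eval_rescaledUnitPart F g c).isUnit_of_isUnit_algebraMap_away
    (isUnit_of_mul_isUnit_right hunit)
end

section
/- Let A be an integral domain which is a Jacobson ring, and suppose that for every nonconstant F ∈ A[Y] there exist a nonzero u ∈ A and b ∈ A_u such that the image of F(b) is not a unit of A_u. Then A satisfies (P2): for every nonconstant F ∈ A[Y] there exists b' ∈ A with F(b') not a unit of A. -/
/-!
Take a maximal ideal `M` of `A_u` containing the nonunit `F(b)`. Since `A` is Jacobson, `M`
contracts to a maximal ideal `p` of `A` with `A/p ≅ A_u/M`, so `b ≡ a (mod M)` for some `a ∈ A`.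
Then `F(a) ≡ F(b) ≡ 0 (mod M)`, hence `F(a) ∈ p` is not a unit.
-/

open Polynomial

theorem Polynomial.eval_mem_of_sub_mem {R : Type*} [CommRing R] {I : Ideal R} (p : R[X])
    {x y : R} (hxy : x - y ∈ I) (hy : p.eval y ∈ I) : p.eval x ∈ I := by
  have hsub : p.eval x - p.eval y ∈ I := I.mem_of_dvd (sub_dvd_eval_sub x y p) hxy
  simpa using I.add_mem hsub hy

theorem IsJacobsonRing.exists_algebraMap_sub_mem_of_isMaximal {R S : Type*} [CommRing R]
    [IsJacobsonRing R] [CommRing S] [Algebra R S] (u : R) [IsLocalization.Away u S]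
    {M : Ideal S} (hM : M.IsMaximal) (b : S) : ∃ a : R, algebraMap R S a - b ∈ M := by
  have hunder : (M.under R).IsMaximal :=
    ((IsLocalization.isMaximal_iff_isMaximal_disjoint S u M).1 hM).1
  obtain ⟨a, ha⟩ := IsLocalization.surjective_quotientMap_of_maximal_of_localization
    (Submonoid.powers u) S (H := le_rfl) hunder (Ideal.Quotient.mk M b)
  obtain ⟨a, rfl⟩ := Ideal.Quotient.mk_surjective a
  refine ⟨a, ?_⟩
  rwa [Ideal.quotientMap_mk, Ideal.Quotient.eq] at ha

theorem stmt_10_general {A : Type*} [CommRing A] [IsJacobsonRing A]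
    (h : ∀ F : Polynomial A, 0 < F.natDegree →
      ∃ u : A, u ≠ 0 ∧ ∃ b : Localization.Away u,
        ¬ IsUnit ((F.map (algebraMap A (Localization.Away u))).eval b))
    (F : Polynomial A) (hF : 0 < F.natDegree) :
    ∃ b' : A, ¬ IsUnit (F.eval b') := by
  obtain ⟨u, -, b, hb⟩ := h F hF
  obtain ⟨M, hM, hbM⟩ := exists_max_ideal_of_mem_nonunits (mem_nonunits_iff.2 hb)
  obtain ⟨a, ha⟩ := IsJacobsonRing.exists_algebraMap_sub_mem_of_isMaximal u hM b
  refine ⟨a, fun hunit => hM.ne_top (M.eq_top_of_isUnit_mem ?_ (hunit.map (algebraMap A _)))⟩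
  rw [← aeval_algebraMap_apply_eq_algebraMap_eval, ← eval_map_algebraMap]
  exact eval_mem_of_sub_mem _ ha hbM

theorem stmt_10 {A : Type*} [CommRing A] [IsDomain A] [IsJacobsonRing A]
    (h : ∀ F : Polynomial A, 0 < F.natDegree →
      ∃ u : A, u ≠ 0 ∧ ∃ b : Localization.Away u,
        ¬ IsUnit ((F.map (algebraMap A (Localization.Away u))).eval b))
    (F : Polynomial A) (hF : 0 < F.natDegree) :
    ∃ b' : A, ¬ IsUnit (F.eval b') :=
  stmt_10_general h F hF
end

section
/- Let A be the localization of ℤ at the multiplicative set generated by 2 and the primes congruent to 1 modulo 4. Then for every b ∈ A, the element b² + 1 is a unit of A. In particular, the polynomial Y² + 1 ∈ A[Y] is nonconstant but Y² + 1 takes only unit values on A, so A does not satisfy condition (P2). -/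
/-- The multiplicative set of `ℤ` generated by `2` and the primes congruent to `1` mod `4`. -/
def sigmaSet : Submonoid ℤ :=
  Submonoid.closure {x : ℤ | x = 2 ∨ ∃ p : ℕ, p.Prime ∧ p % 4 = 1 ∧ x = (p : ℤ)}

/-!
Write `b = r / s` with `s ∈ Σ`. Then `b² + 1 = (r² + s²) / s²`, so it suffices that `r² + s² ∈ Σ`,
i.e. that every prime `p ∣ r² + s²` is `2` or `≡ 1 (mod 4)`. If `p ∣ s` this holds because
`s ∈ Σ`; otherwise `(r / s)² = -1` in `ZMod p`, which forces `p ≢ 3 (mod 4)`.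
-/

theorem Int.mem_closure_natCast_image_iff {S : Set ℕ} (hS : ∀ p ∈ S, p.Prime) {x : ℤ} :
    x ∈ Submonoid.closure (((↑) : ℕ → ℤ) '' S) ↔
      0 < x ∧ ∀ p : ℕ, p.Prime → (p : ℤ) ∣ x → p ∈ S := by
  constructor
  · intro hx
    induction hx using Submonoid.closure_induction with
    | mem y hy =>
      obtain ⟨q, hq, rfl⟩ := hy
      refine ⟨mod_cast (hS q hq).pos, fun p hp hpq => ?_⟩
      rwa [(Nat.prime_dvd_prime_iff_eq hp (hS q hq)).mp (mod_cast hpq)]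
    | one => exact ⟨one_pos, fun p hp hp1 => absurd (mod_cast hp1 : p ∣ 1) hp.not_dvd_one⟩
    | mul y z _ _ hy hz =>
      refine ⟨mul_pos hy.1 hz.1, fun p hp hpyz => ?_⟩
      rcases (Nat.prime_iff_prime_int.mp hp).dvd_or_dvd hpyz with h | h
      exacts [hy.2 p hp h, hz.2 p hp h]
  · rintro ⟨hx, hxS⟩
    lift x to ℕ using hx.le
    have hx0 : x ≠ 0 := by exact_mod_cast hx.ne'
    rw [← Nat.prod_primeFactorsList hx0, Nat.cast_list_prod]
    refine Submonoid.list_prod_mem _ fun q hq => ?_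
    obtain ⟨p, hp, rfl⟩ := List.mem_map.mp hq
    have hpx := Nat.dvd_of_mem_primeFactorsList hp
    exact Submonoid.subset_closure
      ⟨p, hxS p (Nat.prime_of_mem_primeFactorsList hp) (mod_cast hpx), rfl⟩

theorem sigmaSet_eq_closure :
    sigmaSet = Submonoid.closure (((↑) : ℕ → ℤ) '' {p | p.Prime ∧ (p = 2 ∨ p % 4 = 1)}) := by
  refine congrArg Submonoid.closure (Set.ext fun x => ⟨?_, ?_⟩)
  · rintro (rfl | ⟨p, hp, hp4, rfl⟩)
    exacts [⟨2, ⟨Nat.prime_two, .inl rfl⟩, rfl⟩, ⟨p, ⟨hp, .inr hp4⟩, rfl⟩]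
  · rintro ⟨p, ⟨hp, rfl | hp4⟩, rfl⟩
    exacts [.inl rfl, .inr ⟨p, hp, hp4, rfl⟩]

theorem mem_sigmaSet_iff {x : ℤ} :
    x ∈ sigmaSet ↔ 0 < x ∧ ∀ p : ℕ, p.Prime → (p : ℤ) ∣ x → p = 2 ∨ p % 4 = 1 := by
  rw [sigmaSet_eq_closure, Int.mem_closure_natCast_image_iff fun p hp => hp.1]
  exact and_congr_right fun _ => forall₂_congr fun p hp => imp_congr_right fun _ =>
    and_iff_right hp

theorem Nat.Prime.mod_four_ne_three_of_dvd_sq_add_sq {p : ℕ} (hp : p.Prime) {r s : ℤ}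
    (hrs : (p : ℤ) ∣ r ^ 2 + s ^ 2) (hs : ¬ (p : ℤ) ∣ s) : p % 4 ≠ 3 := by
  have := Fact.mk hp
  refine ZMod.mod_four_ne_three_of_sq_eq_neg_sq' (x := r) (y := s) ?_ ?_
  · rwa [Ne, ZMod.intCast_zmod_eq_zero_iff_dvd]
  · rw [eq_neg_iff_add_eq_zero]
    exact_mod_cast (ZMod.intCast_zmod_eq_zero_iff_dvd _ p).mpr hrs

theorem sq_add_sq_mem_sigmaSet (r : ℤ) {s : ℤ} (hs : s ∈ sigmaSet) : r ^ 2 + s ^ 2 ∈ sigmaSet := by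
  rw [mem_sigmaSet_iff] at hs ⊢
  refine ⟨by have := hs.1; positivity, fun p hp hpd => ?_⟩
  by_cases hps : (p : ℤ) ∣ s
  · exact hs.2 p hp hps
  · have := hp.mod_four_ne_three_of_dvd_sq_add_sq hpd hps
    rcases hp.eq_two_or_odd with h | h <;> omega

theorem IsLocalization.isUnit_sq_add_one {R S : Type*} [CommRing R] [CommRing S] [Algebra R S]
    (M : Submonoid R) [IsLocalization M S] (hM : ∀ r, ∀ s ∈ M, r ^ 2 + s ^ 2 ∈ M) (b : S) :
    IsUnit (b ^ 2 + 1) := by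
  obtain ⟨⟨r, s⟩, rfl⟩ := IsLocalization.mk'_surjective M b
  have h : (mk' S r s ^ 2 + 1) * algebraMap R S (s ^ 2) = algebraMap R S (r ^ 2 + s ^ 2) := by
    rw [add_mul, one_mul, map_pow, ← mul_pow, mk'_spec, map_add, map_pow, map_pow]
  exact isUnit_of_mul_isUnit_left (h ▸ map_units S ⟨_, hM r s s.2⟩)

theorem stmt_15 :
    (∀ b : Localization sigmaSet, IsUnit (b ^ 2 + 1)) ∧
    (0 < (Polynomial.X ^ 2 + 1 : Polynomial (Localization sigmaSet)).natDegree) ∧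
    ¬ (∀ F : Polynomial (Localization sigmaSet), 0 < F.natDegree →
        ∃ b : Localization sigmaSet, ¬ IsUnit (F.eval b)) := by
  have hunit (b : Localization sigmaSet) : IsUnit (b ^ 2 + 1) :=
    IsLocalization.isUnit_sq_add_one sigmaSet (fun r _ hs => sq_add_sq_mem_sigmaSet r hs) b
  have : Nontrivial (Localization sigmaSet) := not_subsingleton_iff_nontrivial.mp <|
    (IsLocalization.subsingleton_iff (M := sigmaSet)).not.mpr fun h =>
      (mem_sigmaSet_iff.mp h).1.false
  have hdeg : 0 < (Polynomial.X ^ 2 + 1 : Polynomial (Localization sigmaSet)).natDegree := by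
    rw [← Polynomial.C_1, Polynomial.natDegree_X_pow_add_C]
    norm_num
  refine ⟨hunit, hdeg, fun h => ?_⟩
  obtain ⟨b, hb⟩ := h _ hdeg
  simp [hunit b] at hb
end

section
/- Let A be an integral domain with fraction field K, and let F ∈ A[Y] be nonconstant. Suppose that for every nonzero g ∈ A there exist u ∈ A, b ∈ A_{ug} and a prime ideal p of A with ug ∉ p such that F(b) ∈ p·A_p. Then for every nonzero g ∈ A there exists a prime ideal p of A with g ∉ p such that the image of F in κ(p)[Y] has a root in the residue field κ(p). -/
/-!
Write `b = a / t` with `t = (u g) ^ n`. Clearing denominators, `c = t ^ deg F * F(a / t)` is the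
element `(F.scaleRoots t)(a)` of `A`; since `F(b) = a' / s` with `a' ∈ p` and `s ∉ p`, we get
`s c ∈ p`, hence `c ∈ p`. In `κ(p)` the image of `t` is nonzero, so `c ↦ 0` forces `F̄(ā / t̄) = 0`.
-/

open Polynomial

section ScaleRoots

variable {A K : Type*} [CommRing A]

theorem map_scaleRoots_eval_eq_pow_mul_eval_div [Field K] (φ : A →+* K) (F : A[X]) (a t : A)
    (ht : φ t ≠ 0) :
    φ ((F.scaleRoots t).eval a) = φ t ^ F.natDegree * (F.map φ).eval (φ a / φ t) := by
  have h := scaleRoots_eval₂_mul φ (φ a / φ t) t (p := F)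
  rwa [mul_div_cancel₀ _ ht, eval₂_hom, ← eval_map] at h

theorem isRoot_map_div_of_map_scaleRoots_eval_eq_zero [Field K] (φ : A →+* K) {F : A[X]}
    {a t : A} (ht : φ t ≠ 0) (hc : φ ((F.scaleRoots t).eval a) = 0) :
    (F.map φ).IsRoot (φ a / φ t) := by
  rw [map_scaleRoots_eval_eq_pow_mul_eval_div φ F a t ht] at hc
  exact (mul_eq_zero.mp hc).resolve_left (pow_ne_zero _ ht)

theorem scaleRoots_eval_mem_of_eval_div_eq [IsDomain A] [Field K] [Algebra A K]
    [IsFractionRing A K] {p : Ideal A} [p.IsPrime] {F : A[X]} {a t a' s : A} (ht : t ≠ 0)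
    (ha' : a' ∈ p) (hs : s ∉ p)
    (heval : (F.map (algebraMap A K)).eval (algebraMap A K a / algebraMap A K t) =
      algebraMap A K a' / algebraMap A K s) :
    (F.scaleRoots t).eval a ∈ p := by
  have hs0 : algebraMap A K s ≠ 0 :=
    IsFractionRing.to_map_eq_zero_iff.not.mpr (ne_of_mem_of_not_mem p.zero_mem hs).symm
  have hsc : s * (F.scaleRoots t).eval a = t ^ F.natDegree * a' := by
    apply IsFractionRing.injective A K
    rw [map_mul, map_scaleRoots_eval_eq_pow_mul_eval_div _ F a t
      (IsFractionRing.to_map_eq_zero_iff.not.mpr ht), heval, map_mul, map_pow,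
      mul_left_comm, mul_div_cancel₀ _ hs0]
  have hmem : s * (F.scaleRoots t).eval a ∈ p := hsc ▸ p.mul_mem_left _ ha'
  exact (‹p.IsPrime›.mem_or_mem hmem).resolve_left hs

end ScaleRoots

theorem residueMap_eq_zero_iff {A : Type*} [CommRing A] (p : Ideal A) [p.IsPrime] (x : A) :
    (algebraMap (A ⧸ p) (FractionRing (A ⧸ p))).comp (Ideal.Quotient.mk p) x = 0 ↔ x ∈ p := by
  rw [RingHom.comp_apply, IsFractionRing.to_map_eq_zero_iff, Ideal.Quotient.eq_zero_iff_mem]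

theorem stmt_17_general {A : Type*} [CommRing A] [IsDomain A]
    (F : Polynomial A)
    (h : ∀ g : A, g ≠ 0 → ∃ u : A, ∃ p : Ideal A, p.IsPrime ∧ u * g ∉ p ∧
      ∃ b : FractionRing A,
        (∃ (a : A) (n : ℕ), b = algebraMap A (FractionRing A) a /
            (algebraMap A (FractionRing A) (u * g)) ^ n) ∧
        ∃ a' ∈ p, ∃ s : A, s ∉ p ∧
          (F.map (algebraMap A (FractionRing A))).eval b =
            algebraMap A (FractionRing A) a' / algebraMap A (FractionRing A) s) :
    ∀ g : A, g ≠ 0 → ∃ p : Ideal A, p.IsPrime ∧ g ∉ p ∧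
      ∃ α : FractionRing (A ⧸ p),
        ((F.map (Ideal.Quotient.mk p)).map
          (algebraMap (A ⧸ p) (FractionRing (A ⧸ p)))).eval α = 0 := by
  intro g hg
  obtain ⟨u, p, hp, hug, b, ⟨a, n, rfl⟩, a', ha', s, hs, heval⟩ := h g hg
  have ht : (u * g) ^ n ∉ p := fun h => hug (hp.mem_of_pow_mem n h)
  rw [← map_pow] at heval
  have hc := scaleRoots_eval_mem_of_eval_div_eq
    (ne_of_mem_of_not_mem p.zero_mem ht).symm ha' hs heval
  let q := (algebraMap (A ⧸ p) (FractionRing (A ⧸ p))).comp (Ideal.Quotient.mk p)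
  refine ⟨p, hp, fun hgp => hug (p.mul_mem_left u hgp), q a / q ((u * g) ^ n), ?_⟩
  rw [map_map]
  exact isRoot_map_div_of_map_scaleRoots_eval_eq_zero q
    (mt (residueMap_eq_zero_iff p _).mp ht) ((residueMap_eq_zero_iff p _).mpr hc)

theorem stmt_17 {A : Type*} [CommRing A] [IsDomain A]
    (F : Polynomial A) (hF : 0 < F.natDegree)
    (h : ∀ g : A, g ≠ 0 → ∃ u : A, ∃ p : Ideal A, p.IsPrime ∧ u * g ∉ p ∧
      ∃ b : FractionRing A,
        (∃ (a : A) (n : ℕ), b = algebraMap A (FractionRing A) a /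
            (algebraMap A (FractionRing A) (u * g)) ^ n) ∧
        ∃ a' ∈ p, ∃ s : A, s ∉ p ∧
          (F.map (algebraMap A (FractionRing A))).eval b =
            algebraMap A (FractionRing A) a' / algebraMap A (FractionRing A) s) :
    ∀ g : A, g ≠ 0 → ∃ p : Ideal A, p.IsPrime ∧ g ∉ p ∧
      ∃ α : FractionRing (A ⧸ p),
        ((F.map (Ideal.Quotient.mk p)).map
          (algebraMap (A ⧸ p) (FractionRing (A ⧸ p)))).eval α = 0 :=
  stmt_17_general F h
end

section
/- Let k be an infinite field and let X ⊆ 𝔸²_k be a smooth affine plane curve over k (the vanishing locus of a nonzero polynomial F ∈ k[t, Y], nonconstant in Y, which is smooth over k). Then there exist λ, μ ∈ k such that the line Y = λt + μ meets X transversally in at least one point; in particular there is a closed point x ∈ X lying on this line whose residue field κ(x) is a separable extension of k. -/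
/-!
Choose a slope `c` with `∂F/∂t + c ∂F/∂Y ≠ 0`; this is possible because `F` has a zero over the
algebraic closure, where its two partial derivatives cannot both vanish. Restricting `F` to the
lines `Y = c t + μ` gives `G(μ, t) ∈ k[μ][t]` with `∂G/∂t ≠ 0`, and smoothness forbids the square of
a polynomial of positive degree in `t` to divide `G`. Hence some irreducible factor `q` of `G` of
positive degree in `t` does not divide `∂G/∂t`, and `a q + b ∂G/∂t = r(μ)` for some nonzero
`r ∈ k[μ]` (the resultant). As `k` is infinite, there is `μ ∈ k` at which `r` and the leading
coefficient of `q` do not vanish; a root `x` of `q(μ, ·)` is then a simple root of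
`G(μ, ·) ∈ k[t]`, hence separable over `k`, and `(x, c x + μ)` is a transverse intersection point.
-/

open MvPolynomial

open scoped Polynomial
open Polynomial (derivative evalRingHom)
open Polynomial.Bivariate

namespace Polynomial

theorem derivative_eq_zero_of_forall_irreducible_dvd
    {R : Type*} [CommRing R] [IsDomain R] [UniqueFactorizationMonoid R] {H : R[X]} (hH : H ≠ 0)
    (h : ∀ q : R[X], Irreducible q → q ∣ H → 0 < q.natDegree →
      q ∣ derivative H ∧ ¬ q * q ∣ H) :
    derivative H = 0 := by
  induction H using UniqueFactorizationMonoid.induction_on_prime with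
  | h₁ => exact absurd rfl hH
  | h₂ u hu =>
    obtain ⟨r, -, rfl⟩ := isUnit_iff.mp hu
    exact derivative_C
  | h₃ a p ha hp ih =>
    have hp' : derivative p = 0 ∧
        ∀ q : R[X], Irreducible q → q ∣ a → 0 < q.natDegree → ¬ q ∣ p := by
      rcases Nat.eq_zero_or_pos p.natDegree with hdeg | hdeg
      · refine ⟨?_, fun q _ _ hq hqp => ?_⟩
        · obtain ⟨c, rfl⟩ := natDegree_eq_zero.mp hdeg
          exact derivative_C
        · have := natDegree_le_of_dvd hqp hp.ne_zero
          omega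
      · obtain ⟨hdvd, hsimple⟩ := h p hp.irreducible (dvd_mul_right _ _) hdeg
        have hpa : ∀ q : R[X], Irreducible q → q ∣ a → ¬ q ∣ p := fun q hq hqa hqp =>
          hsimple (mul_dvd_mul_left p
            ((hq.associated_of_dvd hp.irreducible hqp).symm.dvd.trans hqa))
        refine ⟨?_, fun q hq hqa _ => hpa q hq hqa⟩
        rw [derivative_mul, dvd_add_left (dvd_mul_right p _)] at hdvd
        rcases hp.dvd_mul.mp hdvd with h' | h'
        · exact eq_zero_of_dvd_of_natDegree_lt h' (natDegree_derivative_lt hdeg.ne')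
        · exact absurd dvd_rfl (hpa p hp.irreducible h')
    have ha' : derivative a = 0 := by
      refine ih ha fun q hq hqa hdeg => ?_
      obtain ⟨hdvd, hsimple⟩ := h q hq (hqa.mul_left p) hdeg
      rw [derivative_mul, hp'.1, zero_mul, zero_add] at hdvd
      exact ⟨(hq.prime.dvd_mul.mp hdvd).resolve_left (hp'.2 q hq hqa hdeg),
        fun hsq => hsimple (hsq.mul_left p)⟩
    rw [derivative_mul, hp'.1, ha', zero_mul, mul_zero, add_zero]

theorem exists_mul_add_mul_eq_C_of_irreducible_of_not_dvd
    {R : Type*} [CommRing R] [IsDomain R] [IsGCDMonoid R] {q p : R[X]} (hq : Irreducible q)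
    (hdeg : 0 < q.natDegree) (hqp : ¬ q ∣ p) :
    ∃ a b : R[X], ∃ r : R, r ≠ 0 ∧ q * a + p * b = C r := by
  obtain ⟨a, b, -, -, hab⟩ :=
    exists_mul_add_mul_eq_C_resultant q p le_rfl le_rfl (Or.inl hdeg.ne')
  refine ⟨a, b, _, fun hr => ?_, hab⟩
  let K := FractionRing R
  have hinj := IsFractionRing.injective R K
  have hprim := hq.isPrimitive hdeg.ne'
  have hcop : IsCoprime (q.map (algebraMap R K)) (p.map (algebraMap R K)) :=
    ((hprim.irreducible_iff_irreducible_map_fraction_map).mp hq).coprime_iff_not_dvd.mpr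
      fun h => hqp ((hprim.dvd_iff_fraction_map_dvd_fraction_map K).mpr h)
  have := resultant_ne_zero _ _ hcop
  rw [resultant_map_map, natDegree_map_eq_of_injective hinj,
    natDegree_map_eq_of_injective hinj, hr, map_zero] at this
  exact this rfl

end Polynomial

theorem IsSeparable.of_aeval_derivative_ne_zero {k K : Type*} [Field k] [Field K] [Algebra k K]
    {g : k[X]} {x : K} (hg : Polynomial.aeval x g = 0)
    (hg' : Polynomial.aeval x (derivative g) ≠ 0) : IsSeparable k x := by
  have hint : IsIntegral k x := IsAlgebraic.isIntegral ⟨g, by rintro rfl; simp at hg', hg⟩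
  obtain ⟨h, rfl⟩ := minpoly.dvd k x hg
  refine (Polynomial.separable_iff_derivative_ne_zero (minpoly.irreducible hint)).mpr
    fun hz => hg' ?_
  simp [Polynomial.derivative_mul, hz]

theorem Derivation.dvd_of_mul_self_dvd {R A : Type*} [CommSemiring R] [CommSemiring A]
    [Algebra R A] (D : Derivation R A A) {p q : A} (h : q * q ∣ p) : q ∣ D p := by
  obtain ⟨w, rfl⟩ := h
  simp only [D.leibniz, smul_eq_mul]
  exact dvd_add (dvd_mul_of_dvd_left (dvd_mul_right q q) _)
    (dvd_mul_of_dvd_right (dvd_add (dvd_mul_right _ _) (dvd_mul_right _ _)) _)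

theorem MvPolynomial.pderiv_aeval {R σ τ : Type*} [CommSemiring R] [Fintype σ] [DecidableEq σ]
    (g : σ → MvPolynomial τ R) (i : τ) (p : MvPolynomial σ R) :
    pderiv i (aeval g p) = ∑ j, aeval g (pderiv j p) * pderiv i (g j) := by
  induction p using MvPolynomial.induction_on with
  | C a => simp
  | add p q hp hq => simp only [map_add, hp, hq, add_mul, Finset.sum_add_distrib]
  | mul_X p j hp =>
    simp only [map_mul, aeval_X, pderiv_mul, hp, pderiv_X, Pi.single_apply, mul_ite, mul_one,
      mul_zero, map_add, add_mul, Finset.sum_add_distrib, Finset.sum_mul]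
    simp only [mul_right_comm _ (g j), apply_ite (aeval g), map_zero, ite_mul, zero_mul,
      Finset.sum_ite_eq, Finset.mem_univ, if_true]

section Bivariate

variable {k : Type*} [CommRing k]

theorem aeval_equivMvPolynomial {A : Type*} [CommRing A] [Algebra k A]
    (G : k[X][Y]) (μ : k) (x : A) :
    aeval ![algebraMap k A μ, x] (equivMvPolynomial k G) =
      Polynomial.aeval x (G.map (evalRingHom μ)) := by
  induction G using Polynomial.induction_on' with
  | add p q hp hq => simp [hp, hq]
  | monomial n c =>
    induction c using Polynomial.induction_on' with
    | add p q hp hq => simp [hp, hq]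
    | monomial m a => simp [← Polynomial.C_mul_X_pow_eq_monomial]

theorem degreeOf_one_equivMvPolynomial_C (c : k[X]) :
    degreeOf 1 (equivMvPolynomial k (Polynomial.C c)) = 0 := by
  refine Nat.eq_zero_of_le_zero ?_
  induction c using Polynomial.induction_on' with
  | add p q hp hq => simpa using (degreeOf_add_le 1 _ _).trans (max_le hp hq)
  | monomial m a =>
    rw [← Polynomial.C_mul_X_pow_eq_monomial, map_mul, map_pow, map_mul, map_pow]
    simp only [equivMvPolynomial_C_C, equivMvPolynomial_C_X]
    refine (degreeOf_C_mul_le _ _ _).trans ?_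
    rw [degreeOf_X_pow_of_ne _ (by decide)]

theorem degreeOf_one_equivMvPolynomial_le (G : k[X][Y]) :
    degreeOf 1 (equivMvPolynomial k G) ≤ G.natDegree := by
  cases subsingleton_or_nontrivial k
  · simp [Subsingleton.elim (equivMvPolynomial k G) 0]
  conv_lhs => rw [G.as_sum_range_C_mul_X_pow]
  rw [map_sum]
  refine (degreeOf_sum_le _ _ _).trans (Finset.sup_le fun i hi => ?_)
  rw [map_mul, map_pow, equivMvPolynomial_X]
  refine (degreeOf_mul_le _ _ _).trans ?_
  rw [degreeOf_one_equivMvPolynomial_C, zero_add, degreeOf_X_self_pow]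
  exact Nat.lt_succ_iff.mp (Finset.mem_range.mp hi)

/-- `(alongLines c p)(μ, t) = p(t, c * t + μ)`: the restriction of `p` to the line of slope `c`
and intercept `μ`, parametrised by `t`. The intercept is variable `0` and the parameter variable
`1`, which `Polynomial.Bivariate.equivMvPolynomial` turns into the outer variable. -/
noncomputable def alongLines (c : k) : MvPolynomial (Fin 2) k →ₐ[k] MvPolynomial (Fin 2) k :=
  aeval ![X 1, C c * X 1 + X 0]

theorem aeval_alongLines {A : Type*} [CommRing A] [Algebra k A] (c : k) (a b : A)
    (p : MvPolynomial (Fin 2) k) :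
    aeval ![a, b] (alongLines c p) = aeval ![b, algebraMap k A c * b + a] p := by
  rw [alongLines, ← AlgHom.comp_apply, comp_aeval]
  congr 2
  ext i; fin_cases i <;> simp

theorem alongLines_injective (c : k) : Function.Injective (alongLines c) := by
  refine Function.LeftInverse.injective (g := aeval ![X 1 - C c * X 0, X 0]) fun p => ?_
  rw [alongLines, ← AlgHom.comp_apply, comp_aeval]
  conv_rhs => rw [← aeval_X_left_apply p]
  congr 2
  ext i; fin_cases i <;> simp

theorem pderiv_zero_alongLines (c : k) (p : MvPolynomial (Fin 2) k) :
    pderiv 0 (alongLines c p) = alongLines c (pderiv 1 p) := by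
  rw [alongLines, pderiv_aeval]
  simp [pderiv_X]

theorem pderiv_one_alongLines (c : k) (p : MvPolynomial (Fin 2) k) :
    pderiv 1 (alongLines c p) = alongLines c (pderiv 0 p + C c * pderiv 1 p) := by
  rw [alongLines, pderiv_aeval]
  simp [pderiv_X, mul_comm]

theorem derivative_symm_alongLines (c : k) (p : MvPolynomial (Fin 2) k) :
    derivative ((equivMvPolynomial k).symm (alongLines c p)) =
      (equivMvPolynomial k).symm (alongLines c (pderiv 0 p + C c * pderiv 1 p)) := by
  rw [← pderiv_one_alongLines, AlgEquiv.eq_symm_apply, ← pderiv_one_equivMvPolynomial,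
    AlgEquiv.apply_symm_apply]

theorem aeval_map_symm_alongLines {A : Type*} [CommRing A] [Algebra k A] (c μ : k) (x : A)
    (p : MvPolynomial (Fin 2) k) :
    Polynomial.aeval x (((equivMvPolynomial k).symm (alongLines c p)).map (evalRingHom μ)) =
      aeval ![x, algebraMap k A c * x + algebraMap k A μ] p := by
  rw [← aeval_equivMvPolynomial, AlgEquiv.apply_symm_apply, aeval_alongLines]

def IsSmoothPlaneCurve (K : Type*) [CommRing K] [Algebra k K] (F : MvPolynomial (Fin 2) k) :
    Prop :=
  ∀ x y : K, aeval ![x, y] F = 0 →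
    ¬(aeval ![x, y] (pderiv 0 F) = 0 ∧ aeval ![x, y] (pderiv 1 F) = 0)

theorem IsSmoothPlaneCurve.alongLines {K : Type*} [CommRing K] [Algebra k K]
    {F : MvPolynomial (Fin 2) k} (hF : IsSmoothPlaneCurve K F) (c : k) :
    IsSmoothPlaneCurve K (alongLines c F) := by
  intro a b h h'
  simp only [pderiv_zero_alongLines, pderiv_one_alongLines, aeval_alongLines, map_add, map_mul,
    aeval_C] at h h'
  obtain ⟨h0, h1⟩ := h'
  rw [h0, mul_zero, add_zero] at h1
  exact hF _ _ h ⟨h1, h0⟩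

end Bivariate

section InfiniteField

variable {k K : Type*} [Field k] [Infinite k] [Field K] [IsAlgClosed K] [Algebra k K]

theorem exists_eval_ne_zero_and_aeval_map_evalRingHom_eq_zero {q : k[X][Y]}
    (hq : 0 < q.natDegree) {c : k[X]} (hc : c ≠ 0) :
    ∃ μ : k, c.eval μ ≠ 0 ∧
      ∃ x : K, Polynomial.aeval x (q.map (evalRingHom μ)) = 0 := by
  have hlc : c * q.leadingCoeff ≠ 0 :=
    mul_ne_zero hc (Polynomial.leadingCoeff_ne_zero.mpr (Polynomial.ne_zero_of_natDegree_gt hq))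
  obtain ⟨μ, hμ⟩ : ∃ μ, (c * q.leadingCoeff).eval μ ≠ 0 := by
    by_contra! h
    exact hlc (Polynomial.funext (by simpa using h))
  rw [Polynomial.eval_mul] at hμ
  refine ⟨μ, left_ne_zero_of_mul hμ, IsAlgClosed.exists_aeval_eq_zero K _ ?_⟩
  refine Polynomial.degree_ne_of_natDegree_ne ?_
  rw [Polynomial.natDegree_map_of_leadingCoeff_ne_zero _ (right_ne_zero_of_mul hμ)]
  exact hq.ne'

theorem IsSmoothPlaneCurve.not_mul_self_dvd {G : k[X][Y]}
    (hG : IsSmoothPlaneCurve K (equivMvPolynomial k G)) {q : k[X][Y]}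
    (hq : 0 < q.natDegree) : ¬ q * q ∣ G := by
  intro hqG
  obtain ⟨μ, -, x, hx⟩ :=
    exists_eval_ne_zero_and_aeval_map_evalRingHom_eq_zero (K := K) hq one_ne_zero
  have hsq : equivMvPolynomial k q * equivMvPolynomial k q ∣ equivMvPolynomial k G := by
    simpa using map_dvd (equivMvPolynomial k) hqG
  have hvanish : ∀ f, equivMvPolynomial k q ∣ f → aeval ![algebraMap k K μ, x] f = 0 := by
    rintro f ⟨w, rfl⟩
    rw [map_mul, aeval_equivMvPolynomial, hx, zero_mul]
  exact hG _ _ (hvanish _ (dvd_of_mul_left_dvd hsq))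
    ⟨hvanish _ ((pderiv 0).dvd_of_mul_self_dvd hsq),
      hvanish _ ((pderiv 1).dvd_of_mul_self_dvd hsq)⟩

theorem IsSmoothPlaneCurve.exists_simple_root {G : k[X][Y]}
    (hG : IsSmoothPlaneCurve K (equivMvPolynomial k G)) (hG' : derivative G ≠ 0) :
    ∃ μ : k, ∃ x : K, Polynomial.aeval x (G.map (evalRingHom μ)) = 0 ∧
      Polynomial.aeval x (derivative (G.map (evalRingHom μ))) ≠ 0 := by
  obtain ⟨q, hq, hqG, hdeg, hqG'⟩ : ∃ q : k[X][Y], Irreducible q ∧ q ∣ G ∧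
      0 < q.natDegree ∧ ¬ q ∣ derivative G := by
    by_contra! h
    refine hG' (Polynomial.derivative_eq_zero_of_forall_irreducible_dvd ?_ fun q hq hqG hdeg =>
      ⟨h q hq hqG hdeg, hG.not_mul_self_dvd hdeg⟩)
    rintro rfl
    exact hG' Polynomial.derivative_zero
  obtain ⟨a, b, r, hr, hab⟩ :=
    Polynomial.exists_mul_add_mul_eq_C_of_irreducible_of_not_dvd hq hdeg hqG'
  obtain ⟨μ, hμ, x, hx⟩ :=
    exists_eval_ne_zero_and_aeval_map_evalRingHom_eq_zero (K := K) hdeg hr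
  have hGx : Polynomial.aeval x (G.map (evalRingHom μ)) = 0 := by
    obtain ⟨w, rfl⟩ := hqG
    rw [Polynomial.map_mul, map_mul, hx, zero_mul]
  refine ⟨μ, x, hGx, fun hG'x => hμ ?_⟩
  have := congrArg (fun f => Polynomial.aeval x (f.map (evalRingHom μ))) hab
  simp only [Polynomial.map_add, Polynomial.map_mul, Polynomial.map_C, map_add, map_mul, hx,
    ← Polynomial.derivative_map, hG'x, zero_mul, add_zero, Polynomial.aeval_C] at this
  exact (FaithfulSMul.algebraMap_eq_zero_iff k K).mp this.symm

theorem IsSmoothPlaneCurve.exists_pderiv_add_C_mul_pderiv_ne_zero {F : MvPolynomial (Fin 2) k}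
    (hF : IsSmoothPlaneCurve K F) (hFY : 0 < F.degreeOf 1) :
    ∃ c : k, pderiv 0 F + C c * pderiv 1 F ≠ 0 := by
  have hdeg := degreeOf_one_equivMvPolynomial_le ((equivMvPolynomial k).symm F)
  rw [AlgEquiv.apply_symm_apply] at hdeg
  obtain ⟨μ, -, y, hy⟩ :=
    exists_eval_ne_zero_and_aeval_map_evalRingHom_eq_zero (K := K)
      (hFY.trans_le hdeg) one_ne_zero
  rw [← aeval_equivMvPolynomial, AlgEquiv.apply_symm_apply] at hy
  by_cases h0 : pderiv 0 F = 0
  · refine ⟨1, fun h1 => hF _ _ hy ⟨?_, ?_⟩⟩ <;> simp_all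
  · exact ⟨0, by simpa using h0⟩

end InfiniteField

theorem stmt_19_general {k : Type*} [Field k] [Infinite k]
    (F : MvPolynomial (Fin 2) k)
    (hFY : 0 < F.degreeOf 1)
    -- smoothness of the plane curve F = 0 over k (Jacobian criterion over the algebraic closure)
    (hsmooth : ∀ x y : AlgebraicClosure k,
      (aeval ![x, y]) F = 0 →
        ¬((aeval ![x, y]) (pderiv 0 F) = 0 ∧ (aeval ![x, y]) (pderiv 1 F) = 0)) :
    ∃ lam mu : k, ∃ x y : AlgebraicClosure k,
      y = algebraMap k (AlgebraicClosure k) lam * x + algebraMap k (AlgebraicClosure k) mu ∧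
      (aeval ![x, y]) F = 0 ∧
      -- the line Y = lam * t + mu meets the curve transversally at (x, y)
      (aeval ![x, y]) (pderiv 0 F + C lam * pderiv 1 F) ≠ 0 ∧
      -- the corresponding closed point has residue field separable over k
      IsSeparable k x ∧ IsSeparable k y := by
  have hF : IsSmoothPlaneCurve (AlgebraicClosure k) F := hsmooth
  obtain ⟨lam, hP⟩ := hF.exists_pderiv_add_C_mul_pderiv_ne_zero hFY
  have hG' : derivative ((equivMvPolynomial k).symm (alongLines lam F)) ≠ 0 := by
    rw [derivative_symm_alongLines, EmbeddingLike.map_ne_zero_iff]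
    exact (map_ne_zero_iff _ (alongLines_injective lam)).mpr hP
  obtain ⟨mu, x, hx, hx'⟩ :=
    IsSmoothPlaneCurve.exists_simple_root (by simpa using hF.alongLines lam) hG'
  have hxs : IsSeparable k x := .of_aeval_derivative_ne_zero hx hx'
  rw [Polynomial.derivative_map, derivative_symm_alongLines] at hx'
  rw [aeval_map_symm_alongLines] at hx hx'
  refine ⟨lam, mu, x, _, rfl, hx, hx', hxs, ?_⟩
  have hxs' := mem_separableClosure_iff.mpr hxs
  exact mem_separableClosure_iff.mp <|
    add_mem (mul_mem (algebraMap_mem _ _) hxs') (algebraMap_mem _ _)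

theorem stmt_19 {k : Type*} [Field k] [Infinite k]
    (F : MvPolynomial (Fin 2) k) (hF0 : F ≠ 0)
    (hFY : 0 < F.degreeOf 1)
    -- smoothness of the plane curve F = 0 over k (Jacobian criterion over the algebraic closure)
    (hsmooth : ∀ x y : AlgebraicClosure k,
      (aeval ![x, y]) F = 0 →
        ¬((aeval ![x, y]) (pderiv 0 F) = 0 ∧ (aeval ![x, y]) (pderiv 1 F) = 0)) :
    ∃ lam mu : k, ∃ x y : AlgebraicClosure k,
      y = algebraMap k (AlgebraicClosure k) lam * x + algebraMap k (AlgebraicClosure k) mu ∧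
      (aeval ![x, y]) F = 0 ∧
      -- the line Y = lam * t + mu meets the curve transversally at (x, y)
      (aeval ![x, y]) (pderiv 0 F + C lam * pderiv 1 F) ≠ 0 ∧
      -- the corresponding closed point has residue field separable over k
      IsSeparable k x ∧ IsSeparable k y :=
  stmt_19_general F hFY hsmooth
end
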